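/- arXiv:2601.08050 — 4 statements merged into one kernel-verified Lean document; each statement's English description precedes it below -/
import Mathlib

section
/- Time-continuity estimate for the discounted value: if V satisfies the dynamic programming principle V(t,x) = inf_u { ∫_t^{t+σ} e^{λ(t-s)} h ds + e^{-λσ} V(t+σ, x^u(t+σ)) }, |h| ≤ M_h, V(t+σ,·) is Γ-Lipschitz, ‖V‖_∞ < ∞, and every trajectory moves at most M_f σ in time σ, then |V(t+σ,x) - V(t,x)| ≤ M_h ∫_0^σ e^{-λr} dr + e^{-λσ} Γ M_f σ + |1 - e^{-λσ}| ‖V‖_∞. -/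
open Real MeasureTheory Set

/-- Time-continuity estimate for the discounted value function, stated abstractly:
`A` is the (nonempty) set of controls from time `t`, `head u` is the head integral
`∫_t^{t+σ} e^{λ(t-s)} h ds` and `X u` is the trajectory endpoint `x^u(t+σ)`. -/
theorem value_time_continuity
    {E : Type*} [NormedAddCommGroup E]
    {A : Type*} [Nonempty A]
    (V : ℝ → E → ℝ) (lam Mh Mf Γ C t sigma T : ℝ)
    (hlam : 0 ≤ lam) (hMh : 0 ≤ Mh) (hMf : 0 ≤ Mf) (hΓ : 0 ≤ Γ)
    (hsig : 0 ≤ sigma) (hsigT : sigma ≤ T - t)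
    (x : E) (head : A → ℝ) (X : A → E)
    -- (i) the dynamic programming principle
    (hDPP : V t x = ⨅ u : A, (head u + Real.exp (-lam * sigma) * V (t + sigma) (X u)))
    (hbdd : BddBelow (Set.range fun u : A =>
      head u + Real.exp (-lam * sigma) * V (t + sigma) (X u)))
    -- the head integral is bounded by `M_h ∫_0^σ e^{-λ r} dr`
    (hhead : ∀ u : A, |head u| ≤ Mh * ∫ r in (0:ℝ)..sigma, Real.exp (-lam * r))
    -- (ii) spatial Lipschitz bound of `V(t+σ, ·)` around `x`
    (hLip : ∀ y : E, |V (t + sigma) y - V (t + sigma) x| ≤ Γ * ‖y - x‖)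
    -- (iii) state displacement bound
    (hdisp : ∀ u : A, ‖X u - x‖ ≤ Mf * sigma)
    -- (iv) uniform bound `‖V‖_∞ ≤ C`
    (hVbdd : ∀ (s : ℝ) (y : E), |V s y| ≤ C) :
    |V (t + sigma) x - V t x|
      ≤ Mh * (∫ r in (0:ℝ)..sigma, Real.exp (-lam * r))
        + Real.exp (-lam * sigma) * Γ * Mf * sigma
        + |1 - Real.exp (-lam * sigma)| * C := by
  set e := Real.exp (-lam * sigma) with he
  set B := V (t + sigma) x with hB
  set K := Mh * (∫ r in (0:ℝ)..sigma, Real.exp (-lam * r)) + e * Γ * Mf * sigma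
      + |1 - e| * C with hK
  have hepos : 0 < e := Real.exp_pos _
  have key : ∀ u : A, |head u + e * V (t + sigma) (X u) - B| ≤ K := by
    intro u
    have h1 : |e * V (t + sigma) (X u) - B|
        = |e * (V (t + sigma) (X u) - B) + (e - 1) * B| := by ring_nf
    have h2 : |e * (V (t + sigma) (X u) - B)| ≤ e * Γ * (Mf * sigma) := by
      rw [abs_mul, abs_of_pos hepos]
      have := (hLip (X u)).trans (mul_le_mul_of_nonneg_left (hdisp u) hΓ)
      calc e * |V (t + sigma) (X u) - B| ≤ e * (Γ * (Mf * sigma)) := by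
            exact mul_le_mul_of_nonneg_left this hepos.le
        _ = e * Γ * (Mf * sigma) := by ring
    have h3 : |(e - 1) * B| ≤ |1 - e| * C := by
      rw [abs_mul, abs_sub_comm]
      exact mul_le_mul_of_nonneg_left (hVbdd _ _) (abs_nonneg _)
    calc |head u + e * V (t + sigma) (X u) - B|
        ≤ |head u| + |e * V (t + sigma) (X u) - B| := by
          have := abs_add_le (head u) (e * V (t + sigma) (X u) - B)
          simpa [add_sub_assoc] using this
      _ ≤ |head u| + (|e * (V (t + sigma) (X u) - B)| + |(e - 1) * B|) := by
          rw [h1]; exact add_le_add le_rfl (abs_add_le _ _)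
      _ ≤ Mh * (∫ r in (0:ℝ)..sigma, Real.exp (-lam * r)) + (e * Γ * (Mf * sigma)
            + |1 - e| * C) := by
          exact add_le_add (hhead u) (add_le_add h2 h3)
      _ = K := by rw [hK]; ring
  have hub : V t x ≤ B + K := by
    rw [hDPP]
    obtain ⟨u⟩ := ‹Nonempty A›
    exact (ciInf_le hbdd u).trans (by linarith [(abs_le.mp (key u)).2])
  have hlb : B - K ≤ V t x := by
    rw [hDPP]
    exact le_ciInf fun u => by linarith [(abs_le.mp (key u)).1]
  rw [abs_sub_le_iff]
  constructor <;> [skip; skip] <;> linarith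
end

section
/- Local supersolution inequality: suppose φ ∈ C¹, the Hamiltonian inequality φ_t(t₀,x₀) + inf_{u∈U}{ h(t₀,x₀,u) + Dφ(t₀,x₀)·f(x₀,u) } - λφ(t₀,x₀) ≥ θ > 0 holds, U is compact, and f is bounded by M_f. Then there exists δ₀ > 0 such that for every measurable control u(·) and every δ ∈ (0,δ₀], the solution y of ẏ = f(y,u), y(0)=x₀ satisfies e^{-λδ}φ(t₀+δ, y(δ)) - φ(t₀,x₀) + ∫_0^δ e^{-λr} h(t₀+r, y(r), u(r)) dr ≥ (θ/2) ∫_0^δ e^{-λr} dr. -/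
open Real MeasureTheory Set

/-- Local supersolution inequality: if
`Λ_λ(t₀,x₀,u;φ) = φ_t + D_xφ·f + h - λφ ≥ θ > 0` for all controls `u`, then on a
short horizon every trajectory produces at least `(θ/2)∫_0^δ e^{-λr} dr` of
discounted cost plus discounted test-function increment. Here `φ'` is the full
Fréchet derivative of `φ`, so `φ' (s,x) (1, f x u) = φ_t(s,x) + D_xφ(s,x)·f(x,u)`. -/
theorem local_supersolution_inequality
    {E : Type*} [NormedAddCommGroup E] [NormedSpace ℝ E]
    {U : Type*} [MetricSpace U] [CompactSpace U] [Nonempty U]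
    (φ : ℝ × E → ℝ) (φ' : ℝ × E → (ℝ × E →L[ℝ] ℝ))
    (hφ : ∀ p : ℝ × E, HasFDerivAt φ (φ' p) p)
    (hφ' : Continuous φ')
    (f : E → U → E) (hf : Continuous fun p : E × U => f p.1 p.2)
    (Mf : ℝ) (hfM : ∀ (x : E) (a : U), ‖f x a‖ ≤ Mf)
    (h : ℝ → E → U → ℝ)
    (hh : Continuous fun p : ℝ × E × U => h p.1 p.2.1 p.2.2)
    (lam θ t₀ : ℝ) (hθ : 0 < θ) (x₀ : E)
    (hΛ : ∀ a : U,
      φ' (t₀, x₀) (1, f x₀ a) + h t₀ x₀ a - lam * φ (t₀, x₀) ≥ θ) :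
    ∃ δ₀ > 0, ∀ δ : ℝ, 0 < δ → δ ≤ δ₀ →
      ∀ (u : ℝ → U) (y : ℝ → E), y 0 = x₀ →
        (∀ r ∈ Set.Icc (0:ℝ) δ, HasDerivAt y (f (y r) (u r)) r) →
        IntervalIntegrable
          (fun r => Real.exp (-lam * r) * h (t₀ + r) (y r) (u r)) volume 0 δ →
        Real.exp (-lam * δ) * φ (t₀ + δ, y δ) - φ (t₀, x₀)
            + (∫ r in (0:ℝ)..δ, Real.exp (-lam * r) * h (t₀ + r) (y r) (u r))
          ≥ (θ / 2) * ∫ r in (0:ℝ)..δ, Real.exp (-lam * r) := by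
  -- continuity of φ
  have hφc : Continuous φ := by
    rw [continuous_iff_continuousAt]; exact fun p => (hφ p).continuousAt
  set Ψ : (ℝ × E) × U → ℝ :=
    fun q => φ' q.1 (1, f q.1.2 q.2) + h q.1.1 q.1.2 q.2 - lam * φ q.1 with hΨdef
  have hΨc : Continuous Ψ := by
    refine Continuous.sub (Continuous.add ?_ ?_) ?_
    · exact (hφ'.comp continuous_fst).clm_apply
        (continuous_const.prodMk (hf.comp
          ((continuous_snd.comp continuous_fst).prodMk continuous_snd)))
    · exact hh.comp ((continuous_fst.comp continuous_fst).prodMk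
        (((continuous_snd.comp continuous_fst)).prodMk continuous_snd))
    · exact continuous_const.mul (hφc.comp continuous_fst)
  have hopen : IsOpen {q : (ℝ × E) × U | θ / 2 < Ψ q} := isOpen_lt continuous_const hΨc
  have hsub : ({((t₀ : ℝ), x₀)} : Set (ℝ × E)) ×ˢ (univ : Set U) ⊆
      {q : (ℝ × E) × U | θ / 2 < Ψ q} := by
    rintro ⟨p, a⟩ ⟨hp, -⟩
    simp only [mem_singleton_iff] at hp
    subst hp
    have := hΛ a
    simp only [hΨdef, mem_setOf_eq]
    linarith
  obtain ⟨v, w, hv, -, hsv, htw, hvw⟩ :=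
    generalized_tube_lemma isCompact_singleton isCompact_univ hopen hsub
  obtain ⟨ε, hε, hball⟩ := Metric.isOpen_iff.mp hv _ (hsv rfl)
  have hMf0 : (0 : ℝ) ≤ Mf :=
    le_trans (norm_nonneg _) (hfM x₀ (Classical.arbitrary U))
  refine ⟨ε / (2 * (1 + Mf)), by positivity, ?_⟩
  intro δ hδ hδ0 u y hy0 hyd hint
  -- trajectory stays near x₀
  have hyb : ∀ r ∈ Icc (0 : ℝ) δ, ‖y r - x₀‖ ≤ Mf * r := by
    intro r hr
    have := (convex_Icc (0 : ℝ) δ).norm_image_sub_le_of_norm_hasDerivWithin_le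
      (f' := fun s => f (y s) (u s))
      (fun s hs => (hyd s hs).hasDerivWithinAt) (fun s _ => hfM _ _)
      (left_mem_Icc.2 hδ.le) hr
    rw [hy0] at this
    simpa [abs_of_nonneg hr.1] using this
  -- the trajectory is inside the tube
  have hmem : ∀ r ∈ Icc (0 : ℝ) δ, θ / 2 < Ψ ((t₀ + r, y r), u r) := by
    intro r hr
    refine hvw ⟨hball ?_, htw (mem_univ _)⟩
    rw [Metric.mem_ball, Prod.dist_eq]
    have h1 : dist (t₀ + r) t₀ ≤ r := by
      rw [Real.dist_eq]; simp [abs_of_nonneg hr.1]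
    have h2 : dist (y r) x₀ ≤ Mf * r := by
      rw [dist_eq_norm]; exact hyb r hr
    have hrδ : r ≤ δ := hr.2
    have : (1 + Mf) * δ ≤ ε / 2 := by
      rw [le_div_iff₀ (by positivity : (0:ℝ) < 2*(1+Mf))] at hδ0
      nlinarith
    have hr1 : dist (t₀ + r) t₀ < ε := by nlinarith
    have hr2 : dist (y r) x₀ < ε := by nlinarith
    exact max_lt hr1 hr2
  -- derivative of the discounted test function
  set G : ℝ → ℝ := fun r => Real.exp (-lam * r) * φ (t₀ + r, y r) with hGdef
  set G' : ℝ → ℝ := fun r => Real.exp (-lam * r) *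
    (φ' (t₀ + r, y r) (1, f (y r) (u r)) - lam * φ (t₀ + r, y r)) with hG'def
  have hG : ∀ r ∈ Icc (0 : ℝ) δ, HasDerivAt G (G' r) r := by
    intro r hr
    have h1 : HasDerivAt (fun s => Real.exp (-lam * s)) (-lam * Real.exp (-lam * r)) r := by
      have := ((hasDerivAt_id r).const_mul (-lam)).exp
      simpa [mul_comm] using this
    have hp : HasDerivAt (fun s : ℝ => ((t₀ + s : ℝ), y s)) ((1 : ℝ), f (y r) (u r)) r :=
      ((hasDerivAt_id r).const_add t₀).prodMk (hyd r hr)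
    have h2 : HasDerivAt (fun s => φ (t₀ + s, y s))
        (φ' (t₀ + r, y r) (1, f (y r) (u r))) r :=
      (hφ _).comp_hasDerivAt r hp
    have := h1.mul h2
    refine this.congr_deriv ?_
    simp only [hG'def]
    ring
  have hGcont : ContinuousOn G (Icc 0 δ) :=
    fun r hr => (hG r hr).continuousAt.continuousWithinAt
  -- integrable lower bound
  set χ : ℝ → ℝ := fun r => θ / 2 * Real.exp (-lam * r)
      - Real.exp (-lam * r) * h (t₀ + r) (y r) (u r) with hχdef
  have hexpint : IntervalIntegrable (fun r : ℝ => Real.exp (-lam * r)) volume 0 δ :=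
    (Real.continuous_exp.comp (continuous_const.mul continuous_id)).intervalIntegrable 0 δ
  have hχii : IntervalIntegrable χ volume 0 δ := by
    exact (hexpint.const_mul (θ / 2)).sub hint
  have hχint : IntegrableOn χ (Icc (0 : ℝ) δ) volume := by
    rw [integrableOn_Icc_iff_integrableOn_Ioc]
    exact (intervalIntegrable_iff_integrableOn_Ioc_of_le hδ.le).mp hχii
  have hle : ∀ r ∈ Ioo (0 : ℝ) δ, χ r ≤ G' r := by
    intro r hr
    have hΨr := hmem r (Ioo_subset_Icc_self hr)
    simp only [hΨdef, mem_setOf_eq] at hΨr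
    have hexp : 0 < Real.exp (-lam * r) := Real.exp_pos _
    simp only [hχdef, hG'def]
    nlinarith
  have key : (∫ r in (0:ℝ)..δ, χ r) ≤ G δ - G 0 :=
    intervalIntegral.integral_le_sub_of_hasDeriv_right_of_le hδ.le hGcont
      (fun r hr => (hG r (Ioo_subset_Icc_self hr)).hasDerivWithinAt) hχint hle
  have hsplit : (∫ r in (0:ℝ)..δ, χ r)
      = θ / 2 * (∫ r in (0:ℝ)..δ, Real.exp (-lam * r))
        - ∫ r in (0:ℝ)..δ, Real.exp (-lam * r) * h (t₀ + r) (y r) (u r) := by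
    rw [hχdef]
    rw [intervalIntegral.integral_sub (hexpint.const_mul (θ / 2)) hint,
      intervalIntegral.integral_const_mul]
  have hG0 : G 0 = φ (t₀, x₀) := by simp [hGdef, hy0]
  have hGδ : G δ = Real.exp (-lam * δ) * φ (t₀ + δ, y δ) := rfl
  rw [hsplit, hG0, hGδ] at key
  linarith
end

section
/- Local subsolution construction: if φ ∈ C¹ and φ_t(t₀,x₀) + inf_{u∈U}{ h(t₀,x₀,u) + Dφ(t₀,x₀)·f(x₀,u) } - λφ(t₀,x₀) ≤ -θ for some θ > 0, with U compact and data continuous, then there exist a constant control u* ∈ U and δ₀ > 0 such that for all δ ∈ (0,δ₀] the trajectory y solving ẏ = f(y,u*), y(0)=x₀ satisfies e^{-λδ}φ(t₀+δ, y(δ)) - φ(t₀,x₀) + ∫_0^δ e^{-λr} h(t₀+r, y(r), u*) dr ≤ -(θ/2) ∫_0^δ e^{-λr} dr. -/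
open Real MeasureTheory Set

lemma stay_in_ball_aux {E : Type*} [NormedAddCommGroup E] [NormedSpace ℝ E]
    (g : E → E) (x₀ : E) (M ρ δ : ℝ) (hM : 0 < M)
    (hbound : ∀ x : E, ‖x - x₀‖ ≤ ρ → ‖g x‖ ≤ M - 1/2)
    (hδ : 0 < δ) (hδρ : M * δ ≤ ρ)
    (y : ℝ → E) (hy0 : y 0 = x₀)
    (hy : ∀ r ∈ Icc (0:ℝ) δ, HasDerivAt y (g (y r)) r) :
    ∀ r ∈ Icc (0:ℝ) δ, ‖y r - x₀‖ ≤ M * r := by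
  set C : Set ℝ := {r ∈ Icc (0:ℝ) δ | ∀ s ∈ Icc (0:ℝ) r, ‖y s - x₀‖ ≤ M * s} with hC
  have h0C : (0:ℝ) ∈ C := by
    refine ⟨⟨le_refl _, hδ.le⟩, fun s hs => ?_⟩
    have : s = 0 := le_antisymm hs.2 hs.1
    simp [this, hy0]
  have hCne : C.Nonempty := ⟨0, h0C⟩
  have hCbdd : BddAbove C := ⟨δ, fun r hr => hr.1.2⟩
  set c := sSup C with hc
  have hc0 : 0 ≤ c := le_csSup hCbdd h0C
  have hcδ : c ≤ δ := csSup_le hCne (fun r hr => hr.1.2)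
  have hclt : ∀ s, 0 ≤ s → s < c → ‖y s - x₀‖ ≤ M * s := by
    intro s hs0 hsc
    obtain ⟨r, hrC, hsr⟩ := exists_lt_of_lt_csSup hCne hsc
    exact hrC.2 s ⟨hs0, hsr.le⟩
  have hcC : c ∈ C := by
    refine ⟨⟨hc0, hcδ⟩, fun s hs => ?_⟩
    rcases lt_or_eq_of_le hs.2 with hlt | heq
    · exact hclt s hs.1 hlt
    · subst heq
      rcases eq_or_lt_of_le hc0 with h0 | h0
      · simp [← h0, hy0]
      · have hycont : ContinuousAt y c := (hy c ⟨hc0, hcδ⟩).continuousAt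
        have hne : Filter.NeBot (nhdsWithin c (Iio c)) := nhdsLT_neBot c
        have htend : Filter.Tendsto (fun t => ‖y t - x₀‖ - M * t) (nhdsWithin c (Iio c))
            (nhds (‖y c - x₀‖ - M * c)) := by
          have hct : ContinuousAt (fun t => ‖y t - x₀‖ - M * t) c := by fun_prop
          exact hct.continuousWithinAt.tendsto
        have hev : ∀ᶠ t in nhdsWithin c (Iio c), (fun t => ‖y t - x₀‖ - M * t) t ≤ 0 := by
          filter_upwards [self_mem_nhdsWithin,
            eventually_nhdsWithin_of_eventually_nhds (isOpen_Ioi.eventually_mem h0)] with t ht ht0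
          have := hclt t (le_of_lt ht0) ht
          simpa using by linarith
        have := le_of_tendsto htend hev
        linarith
  rcases eq_or_lt_of_le hcδ with hceq | hclt2
  · intro r hr; exact hcC.2 r (by rw [hceq]; exact hr)
  · exfalso
    have hyc : ‖y c - x₀‖ ≤ M * c := hcC.2 c ⟨hc0, le_refl _⟩
    have hball : ‖y c - x₀‖ ≤ ρ := hyc.trans (by nlinarith)
    have hgb : ‖g (y c)‖ ≤ M - 1/2 := hbound _ hball
    have hder := hy c ⟨hc0, hcδ⟩
    rw [hasDerivAt_iff_isLittleO] at hder
    have hlo := hder.bound (by norm_num : (0:ℝ) < 1/2)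
    rw [Metric.eventually_nhds_iff] at hlo
    obtain ⟨η, hη, hlo⟩ := hlo
    set s₁ := min (c + η/2) δ with hs₁
    have hcs₁ : c < s₁ := lt_min (by linarith) hclt2
    have hs₁δ : s₁ ≤ δ := min_le_right _ _
    have hs₁C : s₁ ∈ C := by
      refine ⟨⟨by linarith, hs₁δ⟩, fun s hs => ?_⟩
      rcases le_or_gt s c with hsc | hsc
      · exact hcC.2 s ⟨hs.1, hsc⟩
      · have hdist : dist s c < η := by
          rw [Real.dist_eq, abs_of_pos (by linarith)]
          have : s ≤ c + η/2 := hs.2.trans (min_le_left _ _)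
          linarith
        have hb := hlo hdist
        have h1 : ‖y s - y c - (s - c) • g (y c)‖ ≤ 1/2 * |s - c| := by
          simpa [Real.norm_eq_abs] using hb
        have h2 : ‖y s - x₀‖ ≤ ‖y c - x₀‖ + ‖(s - c) • g (y c)‖ + ‖y s - y c - (s - c) • g (y c)‖ := by
          have heq2 : y s - x₀ = (y c - x₀) + (s - c) • g (y c) + (y s - y c - (s - c) • g (y c)) := by
            abel
          rw [heq2]
          exact (norm_add_le _ _).trans (by gcongr; exact norm_add_le _ _)
        rw [norm_smul, Real.norm_eq_abs, abs_of_pos (by linarith : (0:ℝ) < s - c)] at h2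
        rw [abs_of_pos (by linarith : (0:ℝ) < s - c)] at h1
        nlinarith [norm_nonneg (g (y c))]
    have := le_csSup hCbdd hs₁C
    linarith

/-- Local subsolution construction: if
`inf_{u∈U} Λ_λ(t₀,x₀,u;φ) ≤ -θ < 0`, then there is a constant control `u*` and a
short horizon `δ₀ > 0` on which the trajectory driven by `u*` certifies the strict
decrease by at least `(θ/2)∫_0^δ e^{-λr} dr`. Here `φ'` is the full Fréchet
derivative of `φ`, so `φ' (s,x) (1, f x u) = φ_t(s,x) + D_xφ(s,x)·f(x,u)`. -/
theorem local_subsolution_construction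
    {E : Type*} [NormedAddCommGroup E] [NormedSpace ℝ E]
    {U : Type*} [MetricSpace U] [CompactSpace U] [Nonempty U]
    (φ : ℝ × E → ℝ) (φ' : ℝ × E → (ℝ × E →L[ℝ] ℝ))
    (hφ : ∀ p : ℝ × E, HasFDerivAt φ (φ' p) p)
    (hφ' : Continuous φ')
    (f : E → U → E) (hf : Continuous fun p : E × U => f p.1 p.2)
    (h : ℝ → E → U → ℝ)
    (hh : Continuous fun p : ℝ × E × U => h p.1 p.2.1 p.2.2)
    (lam θ t₀ : ℝ) (hθ : 0 < θ) (x₀ : E)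
    (hΛ : (⨅ a : U, (φ' (t₀, x₀) (1, f x₀ a) + h t₀ x₀ a - lam * φ (t₀, x₀)))
            ≤ -θ) :
    ∃ ustar : U, ∃ δ₀ > 0, ∀ δ : ℝ, 0 < δ → δ ≤ δ₀ →
      ∀ y : ℝ → E, y 0 = x₀ →
        (∀ r ∈ Set.Icc (0:ℝ) δ, HasDerivAt y (f (y r) ustar) r) →
        Real.exp (-lam * δ) * φ (t₀ + δ, y δ) - φ (t₀, x₀)
            + (∫ r in (0:ℝ)..δ, Real.exp (-lam * r) * h (t₀ + r) (y r) ustar)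
          ≤ -(θ / 2) * ∫ r in (0:ℝ)..δ, Real.exp (-lam * r) := by
  have hφc : Continuous φ := continuous_iff_continuousAt.2 fun p => (hφ p).continuousAt
  -- minimizer over compact U
  have hAc : Continuous fun u : U => φ' (t₀, x₀) (1, f x₀ u) + h t₀ x₀ u - lam * φ (t₀, x₀) := by
    have h1 : Continuous fun u : U => f x₀ u := hf.comp (Continuous.prodMk_right x₀)
    have h2 : Continuous fun u : U => φ' (t₀, x₀) (1, f x₀ u) :=
      (φ' (t₀, x₀)).continuous.comp (continuous_const.prodMk h1)
    have h3 : Continuous fun u : U => h t₀ x₀ u :=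
      hh.comp (continuous_const.prodMk (continuous_const.prodMk continuous_id))
    exact (h2.add h3).sub continuous_const
  obtain ⟨ustar, -, hustar⟩ :=
    isCompact_univ.exists_isMinOn univ_nonempty hAc.continuousOn
  have hAle : φ' (t₀, x₀) (1, f x₀ ustar) + h t₀ x₀ ustar - lam * φ (t₀, x₀) ≤ -θ :=
    le_trans (le_ciInf fun u => hustar (mem_univ u)) hΛ
  refine ⟨ustar, ?_⟩
  -- the Hamiltonian-type function G
  set G : ℝ × E → ℝ := fun q =>
    φ' (t₀ + q.1, q.2) (1, f q.2 ustar) + h (t₀ + q.1) q.2 ustar - lam * φ (t₀ + q.1, q.2)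
    with hGdef
  have hc1 : Continuous fun q : ℝ × E => ((t₀ + q.1 : ℝ), q.2) :=
    (continuous_const.add continuous_fst).prodMk continuous_snd
  have hGc : Continuous G := by
    have hfu : Continuous fun q : ℝ × E => f q.2 ustar :=
      hf.comp (continuous_snd.prodMk continuous_const)
    have happ : Continuous fun q : ℝ × E => φ' (t₀ + q.1, q.2) (1, f q.2 ustar) :=
      (hφ'.comp hc1).clm_apply (continuous_const.prodMk hfu)
    have hhc : Continuous fun q : ℝ × E => h (t₀ + q.1) q.2 ustar :=
      hh.comp ((continuous_const.add continuous_fst).prodMk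
        (continuous_snd.prodMk continuous_const))
    exact (happ.add hhc).sub (continuous_const.mul (hφc.comp hc1))
  have hG0 : G (0, x₀) ≤ -θ := by
    simpa [hGdef] using hAle
  obtain ⟨ρ₂, hρ₂, hG2⟩ : ∃ ρ₂ > 0, ∀ q : ℝ × E, dist q ((0:ℝ), x₀) < ρ₂ → G q ≤ -θ/2 := by
    obtain ⟨ρ₂, hρ₂, hb⟩ := Metric.continuousAt_iff.1 hGc.continuousAt (θ/2) (by linarith)
    refine ⟨ρ₂, hρ₂, fun q hq => ?_⟩
    have := hb hq
    rw [Real.dist_eq, abs_sub_lt_iff] at this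
    obtain ⟨h5, -⟩ := this
    calc G q = G (0, x₀) + (G q - G (0, x₀)) := by ring
      _ ≤ -θ + θ/2 := add_le_add hG0 h5.le
      _ = -θ/2 := by ring
  -- local bound on the vector field
  set M : ℝ := ‖f x₀ ustar‖ + 1 with hMdef
  have hM : 0 < M := by positivity
  obtain ⟨ρ₁, hρ₁, hfb⟩ : ∃ ρ₁ > 0, ∀ x : E, ‖x - x₀‖ ≤ ρ₁ → ‖f x ustar‖ ≤ M - 1/2 := by
    have hcont : ContinuousAt (fun x : E => f x ustar) x₀ :=
      (hf.comp (continuous_id.prodMk continuous_const)).continuousAt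
    obtain ⟨ρ', hρ', hb⟩ := Metric.continuousAt_iff.1 hcont (1/2) (by norm_num)
    refine ⟨ρ'/2, by linarith, fun x hx => ?_⟩
    have hd : dist x x₀ < ρ' := by rw [dist_eq_norm]; linarith
    have := hb hd
    rw [dist_eq_norm] at this
    have h4 : ‖f x ustar‖ ≤ ‖f x₀ ustar‖ + ‖f x ustar - f x₀ ustar‖ := by
      have : f x ustar = f x₀ ustar + (f x ustar - f x₀ ustar) := by abel
      nth_rewrite 1 [this]
      exact norm_add_le _ _
    simp only [hMdef]
    linarith
  set ρ : ℝ := min ρ₁ (ρ₂/2) with hρdef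
  have hρ : 0 < ρ := lt_min hρ₁ (by linarith)
  refine ⟨min (ρ/M) (ρ₂/2), lt_min (by positivity) (by linarith), ?_⟩
  intro δ hδpos hδδ₀ y hy0 hy
  have hMδρ : M * δ ≤ ρ := by
    have h1 : δ ≤ ρ/M := le_trans hδδ₀ (min_le_left _ _)
    calc M * δ ≤ M * (ρ/M) := by nlinarith
    _ = ρ := by field_simp
  have hδρ₂ : δ ≤ ρ₂/2 := le_trans hδδ₀ (min_le_right _ _)
  have hstay : ∀ r ∈ Icc (0:ℝ) δ, ‖y r - x₀‖ ≤ M * r :=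
    stay_in_ball_aux (fun x => f x ustar) x₀ M ρ δ hM
      (fun x hx => hfb x (hx.trans (min_le_left _ _))) hδpos hMδρ y hy0 hy
  -- G is ≤ -θ/2 along the trajectory
  have hGtraj : ∀ r ∈ Icc (0:ℝ) δ, G (r, y r) ≤ -θ/2 := by
    intro r hr
    apply hG2
    rw [Prod.dist_eq]
    apply max_lt
    · rw [Real.dist_eq, sub_zero, abs_of_nonneg hr.1]
      linarith [hr.2]
    · rw [dist_eq_norm]
      have := hstay r hr
      have hMr : M * r ≤ M * δ := by nlinarith [hr.2]
      have : ‖y r - x₀‖ ≤ ρ := by linarith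
      have hρρ₂ : ρ ≤ ρ₂/2 := min_le_right _ _
      linarith
  -- continuity facts along the trajectory
  have hycont : ∀ r ∈ Icc (0:ℝ) δ, ContinuousAt y r := fun r hr => (hy r hr).continuousAt
  have hg₁cont : ∀ s ∈ Icc (0:ℝ) δ,
      ContinuousAt (fun s => Real.exp (-lam * s) * h (t₀ + s) (y s) ustar) s := by
    intro s hs
    have h1 : ContinuousAt (fun s : ℝ => Real.exp (-lam * s)) s := by fun_prop
    have h2 : ContinuousAt (fun s : ℝ => ((t₀ + s : ℝ), (y s, ustar))) s :=
      (continuous_const.add continuous_id).continuousAt.prodMk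
        ((hycont s hs).prodMk continuousAt_const)
    have h3 : ContinuousAt (fun s : ℝ => h (t₀ + s) (y s) ustar) s := hh.continuousAt.comp h2
    exact h1.mul h3
  have hg₁contOn : ContinuousOn (fun s => Real.exp (-lam * s) * h (t₀ + s) (y s) ustar)
      (Icc (0:ℝ) δ) := fun s hs => (hg₁cont s hs).continuousWithinAt
  have hg₂c : Continuous fun s : ℝ => Real.exp (-lam * s) := by fun_prop
  -- the comparison function w
  set w : ℝ → ℝ := fun r => Real.exp (-lam * r) * φ (t₀ + r, y r)
      + (∫ s in (0:ℝ)..r, Real.exp (-lam * s) * h (t₀ + s) (y s) ustar)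
      + (θ/2) * ∫ s in (0:ℝ)..r, Real.exp (-lam * s) with hwdef
  have hwd : ∀ x ∈ Ioo (0:ℝ) δ,
      HasDerivAt w (Real.exp (-lam * x) * (G (x, y x) + θ/2)) x := by
    intro x hx
    have hxI : x ∈ Icc (0:ℝ) δ := Ioo_subset_Icc_self hx
    have hA1 : HasDerivAt (fun r : ℝ => Real.exp (-lam * r)) (Real.exp (-lam * x) * (-lam * 1)) x :=
      ((hasDerivAt_id x).const_mul (-lam)).exp
    have hcurve : HasDerivAt (fun r : ℝ => ((t₀ + r : ℝ), y r)) ((1:ℝ), f (y x) ustar) x :=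
      ((hasDerivAt_id x).const_add t₀).prodMk (hy x hxI)
    have hA2 : HasDerivAt (fun r : ℝ => φ (t₀ + r, y r))
        (φ' (t₀ + x, y x) (1, f (y x) ustar)) x :=
      (hφ (t₀ + x, y x)).comp_hasDerivAt x hcurve
    have hprod := hA1.mul hA2
    have hint1 : HasDerivAt (fun r : ℝ => ∫ s in (0:ℝ)..r,
        Real.exp (-lam * s) * h (t₀ + s) (y s) ustar)
        (Real.exp (-lam * x) * h (t₀ + x) (y x) ustar) x := by
      apply intervalIntegral.integral_hasDerivAt_right
      · apply ContinuousOn.intervalIntegrable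
        apply hg₁contOn.mono
        rw [uIcc_of_le hx.1.le]
        exact Icc_subset_Icc le_rfl hx.2.le
      · exact ContinuousAt.stronglyMeasurableAtFilter isOpen_Ioo
          (fun t ht => hg₁cont t (Ioo_subset_Icc_self ht)) x hx
      · exact hg₁cont x hxI
    have hint2 : HasDerivAt (fun r : ℝ => ∫ s in (0:ℝ)..r, Real.exp (-lam * s))
        (Real.exp (-lam * x)) x := by
      apply intervalIntegral.integral_hasDerivAt_right
      · exact hg₂c.intervalIntegrable 0 x
      · exact hg₂c.stronglyMeasurableAtFilter volume (nhds x)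
      · exact hg₂c.continuousAt
    have := (hprod.add hint1).add (hint2.const_mul (θ/2))
    refine HasDerivAt.congr_deriv this ?_
    simp only [hGdef]
    ring
  have hwcont : ContinuousOn w (Icc (0:ℝ) δ) := by
    have hyOn : ContinuousOn y (Icc (0:ℝ) δ) := fun r hr => (hycont r hr).continuousWithinAt
    have p1 : ContinuousOn (fun r : ℝ => Real.exp (-lam * r) * φ (t₀ + r, y r)) (Icc (0:ℝ) δ) := by
      apply ContinuousOn.mul (hg₂c.continuousOn)
      exact hφc.comp_continuousOn
        (((continuous_const.add continuous_id).continuousOn).prodMk hyOn)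
    have p2 : ContinuousOn (fun r : ℝ => ∫ s in (0:ℝ)..r,
        Real.exp (-lam * s) * h (t₀ + s) (y s) ustar) (Icc (0:ℝ) δ) := by
      have := intervalIntegral.continuousOn_primitive_interval
        (a := 0) (b := δ) (μ := volume)
        (f := fun s => Real.exp (-lam * s) * h (t₀ + s) (y s) ustar) ?_
      · rwa [uIcc_of_le hδpos.le] at this
      · rw [uIcc_of_le hδpos.le]
        exact hg₁contOn.integrableOn_Icc
    have p3 : ContinuousOn (fun r : ℝ => (θ/2) * ∫ s in (0:ℝ)..r, Real.exp (-lam * s))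
        (Icc (0:ℝ) δ) := by
      apply ContinuousOn.mul continuousOn_const
      have := intervalIntegral.continuousOn_primitive_interval
        (a := 0) (b := δ) (μ := volume) (f := fun s => Real.exp (-lam * s)) ?_
      · rwa [uIcc_of_le hδpos.le] at this
      · exact (hg₂c.continuousOn).integrableOn_Icc
    exact (p1.add p2).add p3
  have hanti : AntitoneOn w (Icc (0:ℝ) δ) := by
    apply antitoneOn_of_deriv_nonpos (convex_Icc 0 δ) hwcont
    · intro x hx
      rw [interior_Icc] at hx
      exact ((hwd x hx).differentiableAt).differentiableWithinAt
    · intro x hx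
      rw [interior_Icc] at hx
      rw [(hwd x hx).deriv]
      have h1 := hGtraj x (Ioo_subset_Icc_self hx)
      have h2 : (0:ℝ) < Real.exp (-lam * x) := Real.exp_pos _
      nlinarith
  have hfinal : w δ ≤ w 0 :=
    hanti (left_mem_Icc.2 hδpos.le) (right_mem_Icc.2 hδpos.le) hδpos.le
  have hw0 : w 0 = φ (t₀, x₀) := by
    simp [hwdef, hy0]
  have hfinal2 : Real.exp (-lam * δ) * φ (t₀ + δ, y δ)
      + (∫ s in (0:ℝ)..δ, Real.exp (-lam * s) * h (t₀ + s) (y s) ustar)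
      + (θ/2) * (∫ s in (0:ℝ)..δ, Real.exp (-lam * s)) ≤ φ (t₀, x₀) := by
    rw [hw0] at hfinal
    exact hfinal
  linarith
end

section
/- Dynamic programming principle with relative discount (abstract concatenation form): suppose the control space has the concatenation property (any u on [t,t+σ] followed by v on [t+σ,T] is admissible, and restrictions of admissible controls are admissible) and trajectories satisfy the flow property x^u_{t,x}(s) = x^{u|}_{t+σ, x^u_{t,x}(t+σ)}(s) for s ≥ t+σ. Then V_λ(t,x) = inf_u { ∫_t^{t+σ} e^{λ(t-s)} h(s,x^u(s),u(s)) ds + e^{-λσ} V_λ(t+σ, x^u(t+σ)) }. -/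
open Real MeasureTheory Set

/-- Relatively discounted value function over an abstract family of admissible
controls `M t` (functions of time) with trajectory map `traj`. -/
noncomputable def Vdisc {E U : Type*} [NormedAddCommGroup E]
    (lam : ℝ) (H : ℝ → E → U → ℝ) (traj : ℝ → E → (ℝ → U) → ℝ → E)
    (M : ℝ → Set (ℝ → U)) (T t : ℝ) (x : E) : ℝ :=
  ⨅ u : M t, ∫ s in t..T, Real.exp (lam * (t - s)) * H s (traj t x u.1 s) (u.1 s)

/-- Dynamic programming principle with relative exponential discount, in abstract
concatenation form: under restriction closure, concatenation closure, and the
flow/semigroup property of trajectories, the value function satisfies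
`V(t,x) = inf_u { ∫_t^{t+σ} e^{λ(t-s)} h ds + e^{-λσ} V(t+σ, x^u(t+σ)) }`. -/
theorem dpp_relative_discount
    {E U : Type*} [NormedAddCommGroup E]
    (lam Mh T t sigma : ℝ) (ht : 0 ≤ t) (hsig : 0 ≤ sigma) (hsigT : sigma ≤ T - t)
    (H : ℝ → E → U → ℝ) (traj : ℝ → E → (ℝ → U) → ℝ → E)
    (M : ℝ → Set (ℝ → U))
    -- the running cost is uniformly bounded, so all integrals are finite
    (hHbdd : ∀ (s : ℝ) (y : E) (a : U), |H s y a| ≤ Mh)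
    (hInt : ∀ (t' : ℝ) (x : E) (u : ℝ → U),
      IntervalIntegrable
        (fun s => Real.exp (lam * (t' - s)) * H s (traj t' x u s) (u s)) volume t' T)
    -- nonemptiness of the admissible classes
    (hne : ∀ t' : ℝ, (M t').Nonempty)
    -- (ii) restriction closure
    (hrestrict : ∀ u ∈ M t, u ∈ M (t + sigma))
    -- (i) concatenation closure
    (hconcat : ∀ u ∈ M t, ∀ v ∈ M (t + sigma),
      (fun s => if s < t + sigma then u s else v s) ∈ M t)
    -- (iii) semigroup/flow property of trajectories
    (hflow : ∀ (x : E), ∀ u ∈ M t, ∀ s : ℝ, t + sigma ≤ s →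
      traj t x u s = traj (t + sigma) (traj t x u (t + sigma)) u s)
    -- trajectories of a concatenated control follow the head then the tail
    (hconcat_traj : ∀ (x : E), ∀ u ∈ M t, ∀ v ∈ M (t + sigma),
      (∀ s : ℝ, s ≤ t + sigma →
        traj t x (fun s => if s < t + sigma then u s else v s) s = traj t x u s) ∧
      (∀ s : ℝ, t + sigma ≤ s →
        traj t x (fun s => if s < t + sigma then u s else v s) s
          = traj (t + sigma) (traj t x u (t + sigma)) v s)) :
    ∀ x : E,
      Vdisc lam H traj M T t x
        = ⨅ u : M t,
            ((∫ s in t..(t + sigma),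
                Real.exp (lam * (t - s)) * H s (traj t x u.1 s) (u.1 s))
              + Real.exp (-lam * sigma)
                * Vdisc lam H traj M T (t + sigma) (traj t x u.1 (t + sigma))) := by
  intro x
  have hts : t ≤ t + sigma := le_add_of_nonneg_right hsig
  have htsT : t + sigma ≤ T := by linarith
  have htT : t ≤ T := by linarith
  haveI hMt : Nonempty (M t) := nonempty_subtype.2 (hne t)
  haveI hMts : Nonempty (M (t + sigma)) := nonempty_subtype.2 (hne (t + sigma))
  obtain ⟨u0, _hu0⟩ := hne t
  have hMh : 0 ≤ Mh := le_trans (abs_nonneg _) (hHbdd t x (u0 t))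
  set C : ℝ := Real.exp (|lam| * (T - t)) * Mh with hCdef
  have hC : 0 ≤ C := mul_nonneg (Real.exp_pos _).le hMh
  -- pointwise bound on the integrand
  have hpt : ∀ t' : ℝ, t ≤ t' → ∀ (x' : E) (u : ℝ → U), ∀ s ∈ Set.Icc t' T,
      |Real.exp (lam * (t' - s)) * H s (traj t' x' u s) (u s)| ≤ C := by
    intro t' ht' x' u s hs
    rw [abs_mul, abs_of_pos (Real.exp_pos _)]
    refine mul_le_mul ?_ (hHbdd _ _ _) (abs_nonneg _) (Real.exp_pos _).le
    apply Real.exp_le_exp.2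
    calc lam * (t' - s) ≤ |lam * (t' - s)| := le_abs_self _
      _ = |lam| * |t' - s| := abs_mul _ _
      _ ≤ |lam| * (T - t) := by
          refine mul_le_mul_of_nonneg_left ?_ (abs_nonneg _)
          rw [abs_le]
          constructor <;> linarith [hs.1, hs.2]
  -- bound on partial cost integrals
  have hintbd : ∀ t' : ℝ, t ≤ t' → ∀ (x' : E) (u : ℝ → U), ∀ a b : ℝ,
      t' ≤ a → a ≤ b → b ≤ T →
      |∫ s in a..b, Real.exp (lam * (t' - s)) * H s (traj t' x' u s) (u s)|
        ≤ C * (T - t) := by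
    intro t' ht' x' u a b ha hab hb
    have h1 : ‖∫ s in a..b, Real.exp (lam * (t' - s)) * H s (traj t' x' u s) (u s)‖
        ≤ C * |b - a| := by
      apply intervalIntegral.norm_integral_le_of_norm_le_const
      intro s hs
      rw [Set.uIoc_of_le hab] at hs
      rw [Real.norm_eq_abs]
      exact hpt t' ht' x' u s ⟨le_trans ha hs.1.le, le_trans hs.2 hb⟩
    rw [Real.norm_eq_abs] at h1
    refine le_trans h1 ?_
    rw [abs_of_nonneg (by linarith : (0:ℝ) ≤ b - a)]
    exact mul_le_mul_of_nonneg_left (by linarith) hC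
  -- bddBelow of cost ranges
  have hbdd : ∀ t' : ℝ, t ≤ t' → t' ≤ T → ∀ x' : E,
      BddBelow (Set.range fun u : M t' =>
        ∫ s in t'..T, Real.exp (lam * (t' - s)) * H s (traj t' x' u.1 s) (u.1 s)) := by
    intro t' ht' ht'T x'
    refine ⟨-(C * (T - t)), ?_⟩
    rintro _ ⟨u, rfl⟩
    exact (abs_le.1 (hintbd t' ht' x' u.1 t' T le_rfl ht'T le_rfl)).1
  -- lower bound on the value function
  have hVlb : ∀ t' : ℝ, t ≤ t' → t' ≤ T → ∀ x' : E,
      -(C * (T - t)) ≤ Vdisc lam H traj M T t' x' := by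
    intro t' ht' ht'T x'
    haveI : Nonempty (M t') := nonempty_subtype.2 (hne t')
    exact le_ciInf fun u => (abs_le.1 (hintbd t' ht' x' u.1 t' T le_rfl ht'T le_rfl)).1
  -- splitting an integral at t + sigma
  have hsplitJ : ∀ w : ℝ → U,
      (∫ s in t..T, Real.exp (lam * (t - s)) * H s (traj t x w s) (w s))
        = (∫ s in t..(t + sigma), Real.exp (lam * (t - s)) * H s (traj t x w s) (w s))
          + ∫ s in (t + sigma)..T, Real.exp (lam * (t - s)) * H s (traj t x w s) (w s) := by
    intro w
    rw [← intervalIntegral.integral_add_adjacent_intervals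
      ((hInt t x w).mono_set ?_) ((hInt t x w).mono_set ?_)]
    · rw [Set.uIcc_of_le hts, Set.uIcc_of_le htT]
      exact Set.Icc_subset_Icc le_rfl htsT
    · rw [Set.uIcc_of_le htsT, Set.uIcc_of_le htT]
      exact Set.Icc_subset_Icc hts le_rfl
  -- tail identity for admissible controls, via the flow property
  have htail : ∀ u ∈ M t,
      (∫ s in (t + sigma)..T, Real.exp (lam * (t - s)) * H s (traj t x u s) (u s))
        = Real.exp (-lam * sigma)
          * ∫ s in (t + sigma)..T, Real.exp (lam * (t + sigma - s))
              * H s (traj (t + sigma) (traj t x u (t + sigma)) u s) (u s) := by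
    intro u hu
    rw [← intervalIntegral.integral_const_mul]
    apply intervalIntegral.integral_congr
    intro s hs
    rw [Set.uIcc_of_le htsT] at hs
    dsimp only
    rw [hflow x u hu s hs.1, ← mul_assoc, ← Real.exp_add]
    congr 2
    ring
  apply le_antisymm
  · -- V ≤ RHS : the ε-optimal concatenation argument
    refine le_ciInf fun u => ?_
    refine le_of_forall_pos_le_add fun ε hε => ?_
    set y : E := traj t x u.1 (t + sigma) with hy
    have hεexp : 0 < ε * Real.exp (lam * sigma) := mul_pos hε (Real.exp_pos _)
    have hlt : (⨅ v : M (t + sigma),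
        ∫ s in (t + sigma)..T, Real.exp (lam * (t + sigma - s))
          * H s (traj (t + sigma) y v.1 s) (v.1 s))
        < Vdisc lam H traj M T (t + sigma) y + ε * Real.exp (lam * sigma) := by
      have : Vdisc lam H traj M T (t + sigma) y
          = ⨅ v : M (t + sigma),
              ∫ s in (t + sigma)..T, Real.exp (lam * (t + sigma - s))
                * H s (traj (t + sigma) y v.1 s) (v.1 s) := rfl
      linarith [this]
    obtain ⟨v, hv⟩ := exists_lt_of_ciInf_lt hlt
    have hw : (fun s => if s < t + sigma then u.1 s else v.1 s) ∈ M t :=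
      hconcat u.1 u.2 v.1 v.2
    set w : ℝ → U := fun s => if s < t + sigma then u.1 s else v.1 s with hwdef
    have hVle : Vdisc lam H traj M T t x
        ≤ ∫ s in t..T, Real.exp (lam * (t - s)) * H s (traj t x w s) (w s) :=
      ciInf_le (hbdd t le_rfl htT x) ⟨w, hw⟩
    -- head of the concatenation agrees with u a.e.
    have hhead : (∫ s in t..(t + sigma), Real.exp (lam * (t - s)) * H s (traj t x w s) (w s))
        = ∫ s in t..(t + sigma), Real.exp (lam * (t - s)) * H s (traj t x u.1 s) (u.1 s) := by
      apply intervalIntegral.integral_congr_ae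
      have h0 : (volume : Measure ℝ) {t + sigma} = 0 := measure_singleton _
      filter_upwards [measure_eq_zero_iff_ae_notMem.1 h0] with s hs hsI
      rw [Set.uIoc_of_le hts] at hsI
      have hsne : s ≠ t + sigma := fun h => hs (by simp [h])
      have hslt : s < t + sigma := lt_of_le_of_ne hsI.2 hsne
      have h1 : w s = u.1 s := if_pos hslt
      have h2 : traj t x w s = traj t x u.1 s :=
        (hconcat_traj x u.1 u.2 v.1 v.2).1 s hsI.2
      rw [h1, h2]
    -- tail of the concatenation follows v from y
    have htailw : (∫ s in (t + sigma)..T,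
          Real.exp (lam * (t - s)) * H s (traj t x w s) (w s))
        = Real.exp (-lam * sigma)
          * ∫ s in (t + sigma)..T, Real.exp (lam * (t + sigma - s))
              * H s (traj (t + sigma) y v.1 s) (v.1 s) := by
      rw [← intervalIntegral.integral_const_mul]
      apply intervalIntegral.integral_congr
      intro s hs
      rw [Set.uIcc_of_le htsT] at hs
      have h1 : w s = v.1 s := if_neg (not_lt.2 hs.1)
      have h2 : traj t x w s = traj (t + sigma) y v.1 s :=
        (hconcat_traj x u.1 u.2 v.1 v.2).2 s hs.1
      dsimp only
      rw [h1, h2, ← mul_assoc, ← Real.exp_add]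
      congr 2
      ring
    have hexp1 : Real.exp (-lam * sigma) * (ε * Real.exp (lam * sigma)) = ε := by
      rw [mul_comm ε, ← mul_assoc, ← Real.exp_add]
      have h0 : -lam * sigma + lam * sigma = 0 := by ring
      rw [h0, Real.exp_zero, one_mul]
    calc Vdisc lam H traj M T t x
        ≤ ∫ s in t..T, Real.exp (lam * (t - s)) * H s (traj t x w s) (w s) := hVle
      _ = (∫ s in t..(t + sigma), Real.exp (lam * (t - s)) * H s (traj t x u.1 s) (u.1 s))
          + Real.exp (-lam * sigma)
            * ∫ s in (t + sigma)..T, Real.exp (lam * (t + sigma - s))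
                * H s (traj (t + sigma) y v.1 s) (v.1 s) := by
          rw [hsplitJ w, hhead, htailw]
      _ ≤ (∫ s in t..(t + sigma), Real.exp (lam * (t - s)) * H s (traj t x u.1 s) (u.1 s))
          + Real.exp (-lam * sigma)
            * (Vdisc lam H traj M T (t + sigma) y + ε * Real.exp (lam * sigma)) := by
          have := hv.le
          gcongr
      _ = ((∫ s in t..(t + sigma), Real.exp (lam * (t - s)) * H s (traj t x u.1 s) (u.1 s))
          + Real.exp (-lam * sigma) * Vdisc lam H traj M T (t + sigma) y) + ε := by
          rw [mul_add, hexp1]; ring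
  · -- RHS ≤ V : every admissible control dominates the split cost
    show (⨅ u : M t, _) ≤ Vdisc lam H traj M T t x
    have : Vdisc lam H traj M T t x
        = ⨅ u : M t, ∫ s in t..T,
            Real.exp (lam * (t - s)) * H s (traj t x u.1 s) (u.1 s) := rfl
    rw [this]
    refine le_ciInf fun u => ?_
    have hgbdd : BddBelow (Set.range fun u : M t =>
        (∫ s in t..(t + sigma), Real.exp (lam * (t - s)) * H s (traj t x u.1 s) (u.1 s))
          + Real.exp (-lam * sigma)
            * Vdisc lam H traj M T (t + sigma) (traj t x u.1 (t + sigma))) := by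
      refine ⟨-(C * (T - t)) + Real.exp (-lam * sigma) * (-(C * (T - t))), ?_⟩
      rintro _ ⟨u, rfl⟩
      refine add_le_add ?_ ?_
      · exact (abs_le.1 (hintbd t le_rfl x u.1 t (t + sigma) le_rfl hts htsT)).1
      · exact mul_le_mul_of_nonneg_left (hVlb (t + sigma) hts htsT _) (Real.exp_pos _).le
    refine le_trans (ciInf_le hgbdd u) ?_
    -- g(u) ≤ J(u)
    have hVleCost : Vdisc lam H traj M T (t + sigma) (traj t x u.1 (t + sigma))
        ≤ ∫ s in (t + sigma)..T, Real.exp (lam * (t + sigma - s))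
            * H s (traj (t + sigma) (traj t x u.1 (t + sigma)) u.1 s) (u.1 s) :=
      ciInf_le (hbdd (t + sigma) hts htsT _) ⟨u.1, hrestrict u.1 u.2⟩
    rw [hsplitJ u.1, htail u.1 u.2]
    refine add_le_add le_rfl ?_
    exact mul_le_mul_of_nonneg_left hVleCost (Real.exp_pos _).le
end
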